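/- arXiv:2506.22779 — 3 statements merged into one kernel-verified Lean document; each statement's English description precedes it below -/
import Mathlib

section
/- There exists a constant C ≥ 0 such that for all β₁, β₂ ∈ [0,2] and all measurable functions f₁, f₂ : [0,1] → [1,2], one has ‖u(·; β₁, f₁) − u(·; β₂, f₂)‖_{L²} ≤ C (|β₁ − β₂| + ‖f₁ − f₂‖_{L²}). (This is the Lipschitz condition of Assumption 3(a) with r = 0 for the SemiPDE model of Example 3.) -/
/-!
Writing `t = x - s`, the integrands of `v(x; β₁, f₁)` and `v(x; β₂, f₂)` differ by
`eˢ ((e^{β₁t} - e^{β₂t}) f₁(s) + e^{β₂t} (f₁ - f₂)(s))`, and `|e^a - e^b| ≤ e^B |a - b|` for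
`a, b ≤ B`. Hence both components of `u(·; β₁, f₁) - u(·; β₂, f₂)` are bounded uniformly on `[0,1]`
by a multiple of `|β₁ - β₂| + ∫₀¹ |f₁ - f₂|`, and `∫₀¹ |g| ≤ ‖g‖_{L²}` (the variance of `|g|` on the
probability space `(0,1]` is nonnegative). A uniform bound on `[0,1]` is also an `L²` bound.
-/

open MeasureTheory Set

/-- The solution component `v(x; β, f) = ∫_0^x e^{β(x−s)} e^s f(s) ds`. -/
noncomputable def v (β : ℝ) (f : ℝ → ℝ) (x : ℝ) : ℝ :=
  ∫ s in (0:ℝ)..x, Real.exp (β * (x - s)) * Real.exp s * f s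

/-- The solution `u(x; β, f) = (v(x; β, f), v(x; 2β, f))` of the SemiPDE model of Example 3. -/
noncomputable def u (β : ℝ) (f : ℝ → ℝ) (x : ℝ) : ℝ × ℝ :=
  (v β f x, v (2 * β) f x)

/-- L² norm on [0,1] of a real-valued function. -/
noncomputable def L2 (w : ℝ → ℝ) : ℝ :=
  Real.sqrt (∫ x in (0:ℝ)..1, (w x) ^ 2)

/-- L² norm on [0,1] of an ℝ²-valued function (Euclidean norm on ℝ²). -/
noncomputable def L2v (w : ℝ → ℝ × ℝ) : ℝ :=
  Real.sqrt (∫ x in (0:ℝ)..1, ((w x).1 ^ 2 + (w x).2 ^ 2))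

open Real intervalIntegral ProbabilityTheory

lemma abs_exp_sub_exp_le {a b M : ℝ} (ha : a ≤ M) (hb : b ≤ M) :
    |exp a - exp b| ≤ exp M * |a - b| := by
  wlog hba : b ≤ a generalizing a b
  · rw [abs_sub_comm, abs_sub_comm a]
    exact this hb ha (le_of_not_ge hba)
  rw [abs_of_nonneg (sub_nonneg.2 (exp_le_exp.2 hba)), abs_of_nonneg (sub_nonneg.2 hba)]
  have hsplit : exp a - exp b = exp a * (1 - exp (b - a)) := by
    rw [mul_sub, ← exp_add]; ring_nf
  have hmean : 1 - exp (b - a) ≤ a - b := by linarith [add_one_le_exp (b - a)]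
  rw [hsplit]
  exact mul_le_mul (exp_le_exp.2 ha) hmean (by linarith [exp_le_one_iff.2 (sub_nonpos.2 hba)])
    (exp_pos M).le

lemma abs_exp_mul_sub_exp_mul_le {β₁ β₂ B t a₁ a₂ A : ℝ} (hβ₁ : β₁ ∈ Icc 0 B)
    (hβ₂ : β₂ ∈ Icc 0 B) (ht : t ∈ Icc (0:ℝ) 1) (ha₁ : |a₁| ≤ A) :
    |exp (β₁ * t) * a₁ - exp (β₂ * t) * a₂| ≤ exp B * (A * |β₁ - β₂| + |a₁ - a₂|) := by
  have hβt : ∀ β ∈ Icc 0 B, β * t ≤ B := fun β hβ => by nlinarith [hβ.1, hβ.2, ht.1, ht.2]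
  have hexp : |exp (β₁ * t) - exp (β₂ * t)| ≤ exp B * |β₁ - β₂| := by
    refine (abs_exp_sub_exp_le (hβt β₁ hβ₁) (hβt β₂ hβ₂)).trans ?_
    rw [← sub_mul, abs_mul, abs_of_nonneg ht.1]
    exact mul_le_mul_of_nonneg_left (mul_le_of_le_one_right (abs_nonneg _) ht.2) (exp_pos B).le
  calc |exp (β₁ * t) * a₁ - exp (β₂ * t) * a₂|
      = |(exp (β₁ * t) - exp (β₂ * t)) * a₁ + exp (β₂ * t) * (a₁ - a₂)| := by ring_nf
    _ ≤ |exp (β₁ * t) - exp (β₂ * t)| * |a₁| + exp (β₂ * t) * |a₁ - a₂| :=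
      (abs_add_le _ _).trans_eq (by rw [abs_mul, abs_mul, abs_of_pos (exp_pos _)])
    _ ≤ exp B * |β₁ - β₂| * A + exp B * |a₁ - a₂| :=
      add_le_add (mul_le_mul hexp ha₁ (abs_nonneg _) ((abs_nonneg _).trans hexp))
        (mul_le_mul_of_nonneg_right (exp_le_exp.2 (hβt β₂ hβ₂)) (abs_nonneg _))
    _ = exp B * (A * |β₁ - β₂| + |a₁ - a₂|) := by ring

lemma abs_v_sub_v_le {β₁ β₂ B A x : ℝ} {f₁ f₂ : ℝ → ℝ} (hβ₁ : β₁ ∈ Icc 0 B)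
    (hβ₂ : β₂ ∈ Icc 0 B) (hf₁ : IntervalIntegrable f₁ volume 0 1)
    (hf₂ : IntervalIntegrable f₂ volume 0 1) (hA : ∀ s ∈ Icc (0:ℝ) 1, |f₁ s| ≤ A)
    (hx : x ∈ Icc (0:ℝ) 1) :
    |v β₁ f₁ x - v β₂ f₂ x| ≤
      exp (B + 1) * (A * |β₁ - β₂| + ∫ s in (0:ℝ)..1, |f₁ s - f₂ s|) := by
  set G : ℝ → ℝ := fun s => exp (B + 1) * (A * |β₁ - β₂| + |f₁ s - f₂ s|)
  have hA0 : 0 ≤ A := (abs_nonneg _).trans (hA 0 ⟨le_rfl, zero_le_one⟩)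
  have hG0 : ∀ s, 0 ≤ G s := fun s => by positivity
  have hG : IntervalIntegrable G volume 0 1 :=
    (intervalIntegrable_const.add (hf₁.sub hf₂).abs).const_mul _
  have h0x : uIcc 0 x ⊆ uIcc (0:ℝ) 1 := by
    rw [uIcc_of_le hx.1, uIcc_of_le zero_le_one]; exact Icc_subset_Icc_right hx.2
  have hkernel : ∀ β f, IntervalIntegrable f volume 0 1 →
      IntervalIntegrable (fun s => exp (β * (x - s)) * exp s * f s) volume 0 x :=
    fun β f hf => (hf.mono_set h0x).continuousOn_mul (by fun_prop)
  have hpoint : ∀ s ∈ Ioc 0 x, ‖exp (β₁ * (x - s)) * exp s * f₁ s -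
      exp (β₂ * (x - s)) * exp s * f₂ s‖ ≤ G s := by
    rintro s ⟨hs0, hsx⟩
    have hs : s ∈ Icc (0:ℝ) 1 := ⟨hs0.le, hsx.trans hx.2⟩
    calc ‖exp (β₁ * (x - s)) * exp s * f₁ s - exp (β₂ * (x - s)) * exp s * f₂ s‖
        = |exp s * (exp (β₁ * (x - s)) * f₁ s - exp (β₂ * (x - s)) * f₂ s)| := by
          rw [norm_eq_abs]; ring_nf
      _ = exp s * |exp (β₁ * (x - s)) * f₁ s - exp (β₂ * (x - s)) * f₂ s| := by
        rw [abs_mul, abs_exp]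
      _ ≤ exp 1 * (exp B * (A * |β₁ - β₂| + |f₁ s - f₂ s|)) := by
        gcongr
        · exact hs.2
        · exact abs_exp_mul_sub_exp_mul_le hβ₁ hβ₂ ⟨by linarith, by linarith [hx.2]⟩ (hA s hs)
      _ = G s := by simp only [G, exp_add]; ring
  calc |v β₁ f₁ x - v β₂ f₂ x|
      = ‖∫ s in (0:ℝ)..x, (exp (β₁ * (x - s)) * exp s * f₁ s -
          exp (β₂ * (x - s)) * exp s * f₂ s)‖ := by
        rw [integral_sub (hkernel β₁ f₁ hf₁) (hkernel β₂ f₂ hf₂)]; rfl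
    _ ≤ ∫ s in (0:ℝ)..x, G s :=
        norm_integral_le_of_norm_le hx.1 (ae_of_all _ hpoint) (hG.mono_set h0x)
    _ ≤ ∫ s in (0:ℝ)..1, G s := integral_mono_interval le_rfl hx.1 hx.2 (ae_of_all _ hG0) hG
    _ = exp (B + 1) * (A * |β₁ - β₂| + ∫ s in (0:ℝ)..1, |f₁ s - f₂ s|) := by
        simp only [G]
        rw [intervalIntegral.integral_const_mul,
          integral_add intervalIntegrable_const (hf₁.sub hf₂).abs]
        simp

lemma integral_abs_le_L2 {g : ℝ → ℝ} (hg : MemLp g 2 (volume.restrict (Ioc 0 1))) :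
    ∫ s in (0:ℝ)..1, |g s| ≤ L2 g := by
  have : IsProbabilityMeasure (volume.restrict (Ioc (0:ℝ) 1)) := ⟨by simp⟩
  have hvar := variance_nonneg |g| (volume.restrict (Ioc (0:ℝ) 1))
  rw [variance_eq_sub hg.abs] at hvar
  rw [L2, integral_of_le zero_le_one, integral_of_le zero_le_one]
  refine le_sqrt_of_sq_le ?_
  simpa using hvar

lemma abs_v_sub_v_le_L2 {β₁ β₂ B A x : ℝ} {f₁ f₂ : ℝ → ℝ} (hβ₁ : β₁ ∈ Icc 0 B)
    (hβ₂ : β₂ ∈ Icc 0 B) (hf₁ : MemLp f₁ 2 (volume.restrict (Ioc 0 1)))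
    (hf₂ : MemLp f₂ 2 (volume.restrict (Ioc 0 1))) (hA : ∀ s ∈ Icc (0:ℝ) 1, |f₁ s| ≤ A)
    (hx : x ∈ Icc (0:ℝ) 1) :
    |v β₁ f₁ x - v β₂ f₂ x| ≤ exp (B + 1) * (A * |β₁ - β₂| + L2 (fun s => f₁ s - f₂ s)) := by
  have hint : ∀ f : ℝ → ℝ, MemLp f 2 (volume.restrict (Ioc 0 1)) →
      IntervalIntegrable f volume 0 1 := fun f hf =>
    (intervalIntegrable_iff_integrableOn_Ioc_of_le zero_le_one).2 (hf.integrable one_le_two)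
  refine (abs_v_sub_v_le hβ₁ hβ₂ (hint f₁ hf₁) (hint f₂ hf₂) hA hx).trans ?_
  gcongr
  exact integral_abs_le_L2 (hf₁.sub hf₂)

lemma L2v_le_of_abs_le {w : ℝ → ℝ × ℝ} {M : ℝ}
    (hw : ∀ x ∈ Ioc (0:ℝ) 1, |(w x).1| ≤ M ∧ |(w x).2| ≤ M) : L2v w ≤ 2 * M := by
  have hM : 0 ≤ M := (abs_nonneg _).trans (hw 1 ⟨zero_lt_one, le_rfl⟩).1
  rw [L2v, integral_of_le zero_le_one, sqrt_le_left (by positivity)]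
  calc ∫ x in Ioc (0:ℝ) 1, ((w x).1 ^ 2 + (w x).2 ^ 2)
      ≤ ∫ _ in Ioc (0:ℝ) 1, 2 * M ^ 2 := by
        -- `integral_mono_of_nonneg` only asks the upper bound to be integrable.
        refine integral_mono_of_nonneg (ae_of_all _ fun x => by positivity) (integrable_const _)
          (ae_restrict_of_forall_mem measurableSet_Ioc fun x hx => ?_)
        obtain ⟨h₁, h₂⟩ := hw x hx
        nlinarith [sq_abs (w x).1, sq_abs (w x).2, abs_nonneg (w x).1, abs_nonneg (w x).2]
    _ = 2 * M ^ 2 := by simp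
    _ ≤ (2 * M) ^ 2 := by nlinarith

/-- Lipschitz condition of Assumption 3(a) with r = 0 for the SemiPDE model of Example 3. -/
theorem lipschitz_condition_r_zero :
    ∃ C : ℝ, 0 ≤ C ∧
      ∀ β₁ ∈ Set.Icc (0:ℝ) 2, ∀ β₂ ∈ Set.Icc (0:ℝ) 2,
        ∀ f₁ f₂ : ℝ → ℝ, Measurable f₁ → Measurable f₂ →
          (∀ s ∈ Set.Icc (0:ℝ) 1, f₁ s ∈ Set.Icc (1:ℝ) 2) →
          (∀ s ∈ Set.Icc (0:ℝ) 1, f₂ s ∈ Set.Icc (1:ℝ) 2) →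
          L2v (fun x => u β₁ f₁ x - u β₂ f₂ x) ≤
            C * (|β₁ - β₂| + L2 (fun x => f₁ x - f₂ x)) := by
  refine ⟨8 * exp 5, by positivity, ?_⟩
  intro β₁ hβ₁ β₂ hβ₂ f₁ f₂ hm₁ hm₂ hf₁ hf₂
  have hreg : ∀ f : ℝ → ℝ, Measurable f → (∀ s ∈ Icc (0:ℝ) 1, f s ∈ Icc (1:ℝ) 2) →
      (∀ s ∈ Icc (0:ℝ) 1, |f s| ≤ 2) ∧ MemLp f 2 (volume.restrict (Ioc 0 1)) := by
    intro f hm hf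
    have hb : ∀ s ∈ Icc (0:ℝ) 1, |f s| ≤ 2 :=
      fun s hs => abs_le.2 ⟨by linarith [(hf s hs).1], (hf s hs).2⟩
    exact ⟨hb, .of_bound hm.aestronglyMeasurable 2 (ae_restrict_of_forall_mem measurableSet_Ioc
      fun s hs => hb s (Ioc_subset_Icc_self hs))⟩
  obtain ⟨hb₁, hL₁⟩ := hreg f₁ hm₁ hf₁
  obtain ⟨-, hL₂⟩ := hreg f₂ hm₂ hf₂
  have hL0 : 0 ≤ L2 (fun x => f₁ x - f₂ x) := sqrt_nonneg _
  set M := 4 * exp 5 * (|β₁ - β₂| + L2 (fun x => f₁ x - f₂ x))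
  have hv : ∀ γ₁ ∈ Icc (0:ℝ) 4, ∀ γ₂ ∈ Icc (0:ℝ) 4, |γ₁ - γ₂| ≤ 2 * |β₁ - β₂| →
      ∀ x ∈ Ioc (0:ℝ) 1, |v γ₁ f₁ x - v γ₂ f₂ x| ≤ M := fun γ₁ hγ₁ γ₂ hγ₂ hγ x hx =>
    (abs_v_sub_v_le_L2 hγ₁ hγ₂ hL₁ hL₂ hb₁ (Ioc_subset_Icc_self hx)).trans
      (by norm_num [M]; nlinarith [exp_pos 5, abs_nonneg (β₁ - β₂)])
  have hsmall : ∀ β ∈ Icc (0:ℝ) 2, β ∈ Icc (0:ℝ) 4 ∧ 2 * β ∈ Icc (0:ℝ) 4 :=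
    fun β hβ => ⟨⟨hβ.1, by linarith [hβ.2]⟩, ⟨by linarith [hβ.1], by linarith [hβ.2]⟩⟩
  have hΔ : |2 * β₁ - 2 * β₂| ≤ 2 * |β₁ - β₂| := by rw [← mul_sub, abs_mul, abs_two]
  calc L2v (fun x => u β₁ f₁ x - u β₂ f₂ x)
      ≤ 2 * M := L2v_le_of_abs_le fun x hx =>
        ⟨hv β₁ (hsmall β₁ hβ₁).1 β₂ (hsmall β₂ hβ₂).1 (by linarith [abs_nonneg (β₁ - β₂)]) x hx,
          hv (2 * β₁) (hsmall β₁ hβ₁).2 (2 * β₂) (hsmall β₂ hβ₂).2 hΔ x hx⟩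
    _ = 8 * exp 5 * (|β₁ - β₂| + L2 (fun x => f₁ x - f₂ x)) := by ring
end

section
/- For every measurable function f₀ : [0,1] → [1,2] there exists a constant c > 0 such that for all β ∈ [0,2] and all measurable f : [0,1] → [1,2], one has ‖u(·; β, f) − u(·; 1, f₀)‖²_{L²} ≥ c (|β − 1|² + ‖Γ(f − f₀)‖²_{L²}). (This is the stability condition (8) of Assumption 3(b) with r' = 1 for the SemiPDE model of Example 3, with true parameter θ₀ = (1, 2) and true nonparametric component f₀.) -/
open MeasureTheory Set

/-- The first-order integral (Volterra) operator `(Γg)(x) = ∫_0^x g(s) ds`. -/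
noncomputable def Γ (g : ℝ → ℝ) (x : ℝ) : ℝ :=
  ∫ s in (0:ℝ)..x, g s

/-!
Write `b = β - 1`, `h = f - f₀`, `p = Γ h`, `D₁ = v(β, f) - v(1, f₀)` and
`D₂ = v(2β, f) - v(2, f₀)`, so that `‖u(·; β, f) - u(·; 1, f₀)‖² = ∫ D₁² + D₂²`.

* `D₁ = eˣ p + (v(β, f) - v(1, f))` and the bracket is `O(|b| x²)`, so `p² ≲ D₁² + b² x⁴`.
* `D₂ - D₁ = W + ρ`. The second difference `W = v(2β, f) - v(2, f) - v(β, f) + v(1, f)` has kernel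
  `(e^{βt} - eᵗ)(e^{βt} + eᵗ - 1)`, of the sign of `b` and of size at least `|b| t`, so
  `W² ≥ b² x⁴ / 4`. Integration by parts turns `ρ = v(2, h) - v(1, h)` into
  `eˣ ∫₀ˣ e^{x-t} p(t) dt`, so `ρ² ≤ 81 x ∫₀ˣ p²`.

On `[0, δ]` the contribution of `ρ` is of order `δ⁷ b²` against `δ⁵ b²` for `W`, so it can be
absorbed for small `δ`, giving `b² ≲ ∫ D₁² + D₂²`; the first point then bounds `∫ p²` as well.
-/

open Real

namespace Real

theorem sub_mul_exp_le_exp_sub (a b : ℝ) : (b - a) * exp a ≤ exp b - exp a := by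
  have hsplit : exp b = exp (b - a) * exp a := by rw [← exp_add, sub_add_cancel]
  nlinarith [add_one_le_exp (b - a), exp_pos a]

theorem exp_le_three {y : ℝ} (hy : y ≤ 1) : exp y ≤ 3 :=
  (exp_le_exp.2 hy).trans (exp_one_lt_d9.le.trans (by norm_num))

theorem sq_exp_le_nine {y : ℝ} (hy : y ≤ 1) : exp y ^ 2 ≤ 9 :=
  (pow_le_pow_left₀ (exp_pos y).le (exp_le_three hy) 2).trans_eq (by norm_num)

theorem exp_le_nine {y : ℝ} (hy : y ≤ 2) : exp y ≤ 9 := by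
  rw [← add_halves y, exp_add, ← sq]
  exact sq_exp_le_nine (by linarith)

theorem abs_exp_mul_sub_exp_le {β t : ℝ} (hβ : β ∈ Icc (0:ℝ) 2) (ht : t ∈ Icc (0:ℝ) 1) :
    |exp (β * t) - exp t| ≤ 9 * |β - 1| * t := by
  have hbt : 0 ≤ |β - 1| * t := mul_nonneg (abs_nonneg _) ht.1
  have hβt : |β - 1| * t * exp (β * t) ≤ |β - 1| * t * 9 :=
    mul_le_mul_of_nonneg_left (exp_le_nine (by nlinarith [hβ.1, hβ.2, ht.1, ht.2])) hbt
  have hexpt : |β - 1| * t * exp t ≤ |β - 1| * t * 9 :=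
    mul_le_mul_of_nonneg_left (exp_le_nine (by linarith [ht.2])) hbt
  have hup : (β - 1) * t * exp (β * t) ≤ |β - 1| * t * exp (β * t) :=
    mul_le_mul_of_nonneg_right (mul_le_mul_of_nonneg_right (le_abs_self _) ht.1) (exp_pos _).le
  have hlow : (1 - β) * t * exp t ≤ |β - 1| * t * exp t := by
    refine mul_le_mul_of_nonneg_right (mul_le_mul_of_nonneg_right ?_ ht.1) (exp_pos _).le
    rw [abs_sub_comm]; exact le_abs_self _
  rw [abs_le]
  constructor
  · nlinarith [sub_mul_exp_le_exp_sub t (β * t)]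
  · nlinarith [sub_mul_exp_le_exp_sub (β * t) t]

theorem sq_mul_le_mul_exp_mul_sub_exp {β t : ℝ} (hβ : 0 ≤ β) (ht : 0 ≤ t) :
    (β - 1) ^ 2 * t ≤ (β - 1) * (exp (β * t) - exp t) := by
  rcases le_total 1 β with hβ1 | hβ1
  · have hgap : (β - 1) * t ≤ exp (β * t) - exp t := by
      nlinarith [sub_mul_exp_le_exp_sub t (β * t), one_le_exp ht,
        mul_nonneg (sub_nonneg.2 hβ1) ht]
    nlinarith [mul_le_mul_of_nonneg_left hgap (sub_nonneg.2 hβ1)]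
  · have hgap : (1 - β) * t ≤ exp t - exp (β * t) := by
      nlinarith [sub_mul_exp_le_exp_sub (β * t) t, one_le_exp (mul_nonneg hβ ht),
        mul_nonneg (sub_nonneg.2 hβ1) ht]
    nlinarith [mul_le_mul_of_nonneg_left hgap (sub_nonneg.2 hβ1)]

theorem sq_mul_le_mul_exp_second_difference {β t : ℝ} (hβ : 0 ≤ β) (ht : 0 ≤ t) :
    (β - 1) ^ 2 * t ≤ (β - 1) * (exp (2 * β * t) - exp (2 * t) - (exp (β * t) - exp t)) := by
  have hfactor : exp (2 * β * t) - exp (2 * t) - (exp (β * t) - exp t)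
      = (exp (β * t) - exp t) * (exp (β * t) + exp t - 1) := by
    rw [show 2 * β * t = β * t + β * t by ring, show 2 * t = t + t by ring, exp_add, exp_add]
    ring
  have hfirst := sq_mul_le_mul_exp_mul_sub_exp hβ ht
  have hsecond : 1 ≤ exp (β * t) + exp t - 1 := by
    linarith [one_le_exp (mul_nonneg hβ ht), one_le_exp ht]
  rw [hfactor, ← mul_assoc]
  nlinarith [mul_nonneg (sq_nonneg (β - 1)) ht]

end Real

theorem sq_integral_le_mul_integral_sq {g : ℝ → ℝ} {a b : ℝ} (hab : a ≤ b)
    (hg : IntervalIntegrable g volume a b)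
    (hg2 : IntervalIntegrable (fun s => g s ^ 2) volume a b) :
    (∫ s in a..b, g s) ^ 2 ≤ (b - a) * ∫ s in a..b, g s ^ 2 := by
  have hquad : ∀ t : ℝ,
      0 ≤ (b - a) * (t * t) + (-2 * ∫ s in a..b, g s) * t + ∫ s in a..b, g s ^ 2 := by
    intro t
    have h0 : 0 ≤ ∫ s in a..b, (g s - t) ^ 2 :=
      intervalIntegral.integral_nonneg hab fun _ _ => sq_nonneg _
    rw [intervalIntegral.integral_congr (g := fun s => g s ^ 2 - 2 * t * g s + t ^ 2)
        fun _ _ => by ring,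
      intervalIntegral.integral_add (hg2.sub (hg.const_mul _)) intervalIntegrable_const,
      intervalIntegral.integral_sub hg2 (hg.const_mul _), intervalIntegral.integral_const_mul,
      intervalIntegral.integral_const, smul_eq_mul] at h0
    linarith
  have := discrim_le_zero hquad
  rw [discrim] at this
  linarith

theorem integral_mul_eq_sub_integral_deriv_mul_primitive {g h : ℝ → ℝ} {a b : ℝ}
    (hg : ContDiff ℝ 1 g) (hh : IntervalIntegrable h volume a b) :
    ∫ s in a..b, g s * h s
      = g b * (∫ t in a..b, h t) - ∫ s in a..b, deriv g s * ∫ t in a..s, h t := by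
  have hH := hh.absolutelyContinuousOnInterval_intervalIntegral (c := a) left_mem_uIcc
  have hG := hg.contDiffOn.absolutelyContinuousOnInterval (a := a) (b := b)
  have hderiv : ∫ s in a..b, g s * deriv (fun x => ∫ t in a..x, h t) s
      = ∫ s in a..b, g s * h s := by
    refine intervalIntegral.integral_congr_ae ?_
    filter_upwards [hh.ae_hasDerivAt_integral] with s hs hsI
    rw [(hs (uIoc_subset_uIcc hsI) a left_mem_uIcc).deriv]
  rw [← hderiv, hG.integral_mul_deriv_eq_deriv_mul hH]
  simp

theorem Measurable.intervalIntegrable_of_mem_Icc {g : ℝ → ℝ} {a b m M : ℝ} (hg : Measurable g)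
    (hab : a ≤ b) (hgb : ∀ s ∈ Icc a b, g s ∈ Icc m M) : IntervalIntegrable g volume a b :=
  (intervalIntegrable_iff_integrableOn_Icc_of_le hab).2 <|
    Measure.integrableOn_of_bounded (M := |m| ⊔ |M|) (by simp) hg.aestronglyMeasurable <| by
      filter_upwards [ae_restrict_mem measurableSet_Icc] with s hs
      exact abs_le_max_abs_abs (hgb s hs).1 (hgb s hs).2

theorem integral_sq_le_of_sq_le {d p : ℝ → ℝ} {b x : ℝ}
    (hd : ContinuousOn d (Icc 0 1)) (hp : ContinuousOn p (Icc 0 1)) (hx : x ∈ Icc (0:ℝ) 1)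
    (hpd : ∀ x ∈ Icc (0:ℝ) 1, p x ^ 2 ≤ 2 * d x + 5832 * b ^ 2 * x ^ 4) :
    ∫ t in (0:ℝ)..x, p t ^ 2 ≤ 2 * (∫ t in (0:ℝ)..x, d t) + 5832 * b ^ 2 * (x ^ 5 / 5) := by
  have hdx : IntervalIntegrable d volume 0 x :=
    (hd.mono (Icc_subset_Icc_right hx.2)).intervalIntegrable_of_Icc hx.1
  have hquartic : IntervalIntegrable (fun t => 5832 * b ^ 2 * t ^ 4) volume 0 x :=
    Continuous.intervalIntegrable (by fun_prop) _ _
  calc ∫ t in (0:ℝ)..x, p t ^ 2 ≤ ∫ t in (0:ℝ)..x, (2 * d t + 5832 * b ^ 2 * t ^ 4) :=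
        intervalIntegral.integral_mono_on hx.1
          (((hp.pow 2).mono (Icc_subset_Icc_right hx.2)).intervalIntegrable_of_Icc hx.1)
          ((hdx.const_mul 2).add hquartic) fun t ht => hpd t ⟨ht.1, ht.2.trans hx.2⟩
    _ = 2 * (∫ t in (0:ℝ)..x, d t) + 5832 * b ^ 2 * (x ^ 5 / 5) := by
        rw [intervalIntegral.integral_add (hdx.const_mul 2) hquartic,
          intervalIntegral.integral_const_mul, intervalIntegral.integral_const_mul, integral_pow]
        ring

theorem sq_add_integral_sq_le_mul_integral {d p : ℝ → ℝ} {b : ℝ}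
    (hd : ContinuousOn d (Icc 0 1)) (hp : ContinuousOn p (Icc 0 1))
    (hd0 : ∀ x ∈ Icc (0:ℝ) 1, 0 ≤ d x)
    (hpd : ∀ x ∈ Icc (0:ℝ) 1, p x ^ 2 ≤ 2 * d x + 5832 * b ^ 2 * x ^ 4)
    (hbd : ∀ x ∈ Icc (0:ℝ) 1,
      b ^ 2 * x ^ 4 / 4 ≤ 4 * d x + 162 * x * ∫ t in (0:ℝ)..x, p t ^ 2) :
    b ^ 2 + ∫ x in (0:ℝ)..1, p x ^ 2 ≤ 10 ^ 22 * ∫ x in (0:ℝ)..1, d x := by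
  set S := ∫ x in (0:ℝ)..1, d x
  have hdS : ∀ x ∈ Icc (0:ℝ) 1, ∫ t in (0:ℝ)..x, d t ≤ S := fun x hx =>
    intervalIntegral.integral_mono_interval le_rfl hx.1 hx.2
      (by filter_upwards [ae_restrict_mem measurableSet_Ioc] with t ht
          using hd0 t (Ioc_subset_Icc_self ht))
      (hd.intervalIntegrable_of_Icc zero_le_one)
  have hpS : ∀ x ∈ Icc (0:ℝ) 1, ∫ t in (0:ℝ)..x, p t ^ 2 ≤ 2 * S + 1167 * b ^ 2 * x ^ 5 :=
    fun x hx => (integral_sq_le_of_sq_le hd hp hx hpd).trans <| by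
      nlinarith [hdS x hx, mul_nonneg (sq_nonneg b) (pow_nonneg hx.1 5)]
  -- `δ = 1 / 2000` is small enough that `162 * 1167 * b² x⁶ ≤ b² x⁴ / 8` on `[0, δ]`.
  have hsmall : ∀ x ∈ Icc (0:ℝ) (1 / 2000), b ^ 2 * x ^ 4 / 8 ≤ 4 * d x + 324 * S * x := by
    intro x hx
    have hx1 : x ∈ Icc (0:ℝ) 1 := ⟨hx.1, hx.2.trans (by norm_num)⟩
    have hx2 : x ^ 2 ≤ (1 / 2000) ^ 2 := pow_le_pow_left₀ hx.1 hx.2 2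
    have hx3 : 162 * x * ∫ t in (0:ℝ)..x, p t ^ 2 ≤ 162 * x * (2 * S + 1167 * b ^ 2 * x ^ 5) :=
      mul_le_mul_of_nonneg_left (hpS x hx1) (by linarith [hx.1])
    have hb : 0 ≤ b ^ 2 * x ^ 4 := mul_nonneg (sq_nonneg b) (pow_nonneg hx.1 4)
    nlinarith [hbd x hx1, mul_le_mul_of_nonneg_left hx2 hb]
  have hdδ : IntervalIntegrable d volume 0 (1 / 2000) :=
    (hd.mono (Icc_subset_Icc_right (by norm_num))).intervalIntegrable_of_Icc (by norm_num)
  have hlin : IntervalIntegrable (fun x => 324 * S * x) volume 0 (1 / 2000) :=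
    Continuous.intervalIntegrable (by fun_prop) _ _
  have hδ : b ^ 2 * (1 / 2000) ^ 5 / 40 ≤ 4 * S + 162 * S * (1 / 2000) ^ 2 := by
    calc b ^ 2 * (1 / 2000) ^ 5 / 40 = ∫ x in (0:ℝ)..1 / 2000, b ^ 2 * x ^ 4 / 8 := by
          simp_rw [div_eq_mul_inv _ (8:ℝ), intervalIntegral.integral_mul_const,
            intervalIntegral.integral_const_mul, integral_pow]
          ring
      _ ≤ ∫ x in (0:ℝ)..1 / 2000, (4 * d x + 324 * S * x) :=
          intervalIntegral.integral_mono_on (by norm_num)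
            (Continuous.intervalIntegrable (by fun_prop) _ _) ((hdδ.const_mul 4).add hlin) hsmall
      _ = 4 * (∫ x in (0:ℝ)..1 / 2000, d x) + 162 * S * (1 / 2000) ^ 2 := by
          rw [intervalIntegral.integral_add (hdδ.const_mul 4) hlin,
            intervalIntegral.integral_const_mul, intervalIntegral.integral_const_mul, integral_id]
          ring
      _ ≤ 4 * S + 162 * S * (1 / 2000) ^ 2 := by
          linarith [hdS (1 / 2000) ⟨by norm_num, by norm_num⟩]
  have hS : 0 ≤ S := by simpa using hdS 0 (left_mem_Icc.2 zero_le_one)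
  have hQ := hpS 1 (right_mem_Icc.2 zero_le_one)
  norm_num at hδ hQ
  linarith

section Model

variable {f f₀ g : ℝ → ℝ} {β x : ℝ}

theorem intervalIntegrable_v_integrand (c : ℝ) (hf : IntervalIntegrable f volume 0 x) :
    IntervalIntegrable (fun s => exp (c * (x - s)) * exp s * f s) volume 0 x :=
  hf.continuousOn_mul (by fun_prop)

theorem v_eq_exp_mul_integral (c : ℝ) (f : ℝ → ℝ) (x : ℝ) :
    v c f x = exp (c * x) * ∫ s in (0:ℝ)..x, exp ((1 - c) * s) * f s := by
  rw [v, ← intervalIntegral.integral_const_mul]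
  refine intervalIntegral.integral_congr fun s _ => ?_
  rw [← exp_add, ← mul_assoc, ← exp_add]
  ring_nf

theorem continuousOn_v (c : ℝ) (hf : IntervalIntegrable f volume 0 1) :
    ContinuousOn (v c f) (Icc 0 1) := by
  have hprim := intervalIntegral.continuousOn_primitive_interval' (hf.continuousOn_mul
    (g := fun s => exp ((1 - c) * s)) (by fun_prop)) left_mem_uIcc
  rw [uIcc_of_le zero_le_one] at hprim
  simp_rw [funext (v_eq_exp_mul_integral c f)]
  exact (by fun_prop : Continuous fun x => exp (c * x)).continuousOn.mul hprim

theorem continuousOn_Γ (hf : IntervalIntegrable f volume 0 1) : ContinuousOn (Γ f) (Icc 0 1) := by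
  have := intervalIntegral.continuousOn_primitive_interval' hf left_mem_uIcc
  rwa [uIcc_of_le zero_le_one] at this

theorem v_one (f : ℝ → ℝ) (x : ℝ) : v 1 f x = exp x * Γ f x := by
  rw [v, Γ, ← intervalIntegral.integral_const_mul]
  refine intervalIntegral.integral_congr fun s _ => ?_
  rw [← exp_add, one_mul, sub_add_cancel]

theorem v_sub (c : ℝ) (hf : IntervalIntegrable f volume 0 x)
    (hg : IntervalIntegrable g volume 0 x) :
    v c f x - v c g x = v c (fun s => f s - g s) x := by
  rw [v, v, v, ← intervalIntegral.integral_sub (intervalIntegrable_v_integrand c hf)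
    (intervalIntegrable_v_integrand c hg)]
  simp only [mul_sub]

theorem v_sub_v (c c' : ℝ) (hf : IntervalIntegrable f volume 0 x) :
    v c f x - v c' f x
      = ∫ s in (0:ℝ)..x, (exp (c * (x - s)) - exp (c' * (x - s))) * exp s * f s := by
  rw [v, v, ← intervalIntegral.integral_sub (intervalIntegrable_v_integrand c hf)
    (intervalIntegrable_v_integrand c' hf)]
  simp only [sub_mul]

theorem v_two_sub_v_one (hf : IntervalIntegrable f volume 0 x) :
    v 2 f x - v 1 f x = exp x * ∫ t in (0:ℝ)..x, exp (x - t) * Γ f t := by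
  have hkernel : ∀ s, (exp (2 * (x - s)) - exp (1 * (x - s))) * exp s * f s
      = exp x * ((exp (x - s) - 1) * f s) := fun s => by
    rw [show 2 * (x - s) = x + (x - s) - s by ring, one_mul, exp_sub, exp_add, exp_sub]
    field_simp
  have hderiv : ∀ s, deriv (fun s => exp (x - s) - 1) s = -exp (x - s) := fun s => by
    simpa using (((hasDerivAt_id s).const_sub x).exp.sub_const 1).deriv
  rw [v_sub_v 2 1 hf, intervalIntegral.integral_congr fun s _ => hkernel s,
    intervalIntegral.integral_const_mul,
    integral_mul_eq_sub_integral_deriv_mul_primitive (by fun_prop) hf]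
  simp [hderiv, Γ]

theorem abs_v_sub_v_one_le (hf : IntervalIntegrable f volume 0 x) (hf2 : ∀ s ∈ Icc 0 x, |f s| ≤ 2)
    (hβ : β ∈ Icc (0:ℝ) 2) (hx : x ∈ Icc (0:ℝ) 1) :
    |v β f x - v 1 f x| ≤ 54 * |β - 1| * x ^ 2 := by
  have hbound : ∀ s ∈ uIoc 0 x,
      ‖(exp (β * (x - s)) - exp (1 * (x - s))) * exp s * f s‖ ≤ 54 * |β - 1| * x := by
    intro s hs
    rw [uIoc_of_le hx.1] at hs
    have hkernel := abs_exp_mul_sub_exp_le hβ (t := x - s)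
      ⟨by linarith [hs.2], by linarith [hs.1, hx.2]⟩
    have hexp : exp s ≤ 3 := exp_le_three (by linarith [hs.2, hx.2])
    have hfs := hf2 s ⟨hs.1.le, hs.2⟩
    rw [one_mul, norm_mul, norm_mul, Real.norm_eq_abs, Real.norm_eq_abs, Real.norm_eq_abs,
      abs_exp]
    calc |exp (β * (x - s)) - exp (x - s)| * exp s * |f s|
        ≤ (9 * |β - 1| * (x - s)) * 3 * 2 := by
          have : 0 ≤ 9 * |β - 1| * (x - s) := mul_nonneg (by positivity) (sub_nonneg.2 hs.2)
          gcongr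
      _ ≤ 54 * |β - 1| * x := by nlinarith [abs_nonneg (β - 1), hs.1]
  have := intervalIntegral.norm_integral_le_of_norm_le_const hbound
  rw [v_sub_v β 1 hf, ← Real.norm_eq_abs]
  calc _ ≤ 54 * |β - 1| * x * |x - 0| := this
    _ = 54 * |β - 1| * x ^ 2 := by rw [sub_zero, abs_of_nonneg hx.1]; ring

theorem sq_mul_pow_four_le_sq_second_difference (hf : IntervalIntegrable f volume 0 x)
    (hf1 : ∀ s ∈ Icc 0 x, 1 ≤ f s) (hβ : 0 ≤ β) (hx : 0 ≤ x) :
    (β - 1) ^ 2 * x ^ 4 / 4 ≤ (v (2 * β) f x - v 2 f x - (v β f x - v 1 f x)) ^ 2 := by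
  have hW : v (2 * β) f x - v 2 f x - (v β f x - v 1 f x) = ∫ s in (0:ℝ)..x,
      (exp (2 * β * (x - s)) - exp (2 * (x - s)) - (exp (β * (x - s)) - exp (x - s)))
        * exp s * f s := by
    rw [v_sub_v _ _ hf, v_sub_v _ _ hf, ← intervalIntegral.integral_sub
      (hf.continuousOn_mul (by fun_prop)) (hf.continuousOn_mul (by fun_prop))]
    refine intervalIntegral.integral_congr fun s _ => ?_
    simp only [one_mul]
    ring
  have hlin : ∫ s in (0:ℝ)..x, (β - 1) ^ 2 * (x - s) = (β - 1) ^ 2 * x ^ 2 / 2 := by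
    rw [intervalIntegral.integral_const_mul,
      intervalIntegral.integral_comp_sub_left (fun t => t), integral_id]
    ring
  have hlow : (β - 1) ^ 2 * x ^ 2 / 2
      ≤ (β - 1) * (v (2 * β) f x - v 2 f x - (v β f x - v 1 f x)) := by
    rw [hW, ← intervalIntegral.integral_const_mul, ← hlin]
    refine intervalIntegral.integral_mono_on hx (Continuous.intervalIntegrable (by fun_prop) _ _)
      ((hf.continuousOn_mul (by fun_prop)).const_mul _) fun s hs => ?_
    have hkernel := sq_mul_le_mul_exp_second_difference hβ (t := x - s) (by linarith [hs.2])
    have hfs : 1 ≤ exp s * f s := by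
      nlinarith [one_le_exp hs.1, hf1 s hs]
    nlinarith [mul_nonneg (sq_nonneg (β - 1)) (by linarith [hs.2] : (0:ℝ) ≤ x - s)]
  nlinarith [sq_nonneg (v (2 * β) f x - v 2 f x - (v β f x - v 1 f x) - (β - 1) * x ^ 2 / 2),
    mul_le_mul_of_nonneg_right hlow (sq_nonneg x)]

theorem sq_v_two_sub_v_one_le (hf : IntervalIntegrable f volume 0 1) (hx : x ∈ Icc (0:ℝ) 1) :
    (v 2 f x - v 1 f x) ^ 2 ≤ 81 * x * ∫ t in (0:ℝ)..x, Γ f t ^ 2 := by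
  have hΓ : ContinuousOn (Γ f) (uIcc 0 x) :=
    (continuousOn_Γ hf).mono (uIcc_of_le hx.1 ▸ Icc_subset_Icc_right hx.2)
  have hint : ContinuousOn (fun t => exp (x - t) * Γ f t) (uIcc 0 x) :=
    (by fun_prop : Continuous fun t => exp (x - t)).continuousOn.mul hΓ
  have hcs := sq_integral_le_mul_integral_sq hx.1 hint.intervalIntegrable
    (hint.pow 2).intervalIntegrable
  have hweight :
      ∫ t in (0:ℝ)..x, (exp (x - t) * Γ f t) ^ 2 ≤ 9 * ∫ t in (0:ℝ)..x, Γ f t ^ 2 := by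
    rw [← intervalIntegral.integral_const_mul]
    refine intervalIntegral.integral_mono_on hx.1 (hint.pow 2).intervalIntegrable
      ((hΓ.pow 2).intervalIntegrable.const_mul 9) fun t ht => ?_
    rw [mul_pow]
    exact mul_le_mul_of_nonneg_right (sq_exp_le_nine (by linarith [ht.1, hx.2])) (sq_nonneg _)
  rw [sub_zero] at hcs
  rw [v_two_sub_v_one (hf.mono_set (uIcc_subset_uIcc_left (Icc_subset_uIcc hx))), mul_pow]
  calc exp x ^ 2 * (∫ t in (0:ℝ)..x, exp (x - t) * Γ f t) ^ 2
      ≤ 9 * (x * (9 * ∫ t in (0:ℝ)..x, Γ f t ^ 2)) := by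
        gcongr
        · exact sq_exp_le_nine hx.2
        · exact hcs.trans (mul_le_mul_of_nonneg_left hweight hx.1)
    _ = 81 * x * ∫ t in (0:ℝ)..x, Γ f t ^ 2 := by ring

theorem sq_Γ_sub_le (hf : IntervalIntegrable f volume 0 1) (hf₀ : IntervalIntegrable f₀ volume 0 1)
    (hf2 : ∀ s ∈ Icc (0:ℝ) 1, |f s| ≤ 2) (hβ : β ∈ Icc (0:ℝ) 2) (hx : x ∈ Icc (0:ℝ) 1) :
    Γ (fun s => f s - f₀ s) x ^ 2 ≤ 2 * (v β f x - v 1 f₀ x) ^ 2 + 5832 * (β - 1) ^ 2 * x ^ 4 := by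
  have hsub : uIcc 0 x ⊆ uIcc 0 1 := uIcc_subset_uIcc_left (Icc_subset_uIcc hx)
  have hsplit : exp x * Γ (fun s => f s - f₀ s) x = (v β f x - v 1 f₀ x) - (v β f x - v 1 f x) := by
    rw [← v_one, ← v_sub 1 (hf.mono_set hsub) (hf₀.mono_set hsub)]
    ring
  have hA : (v β f x - v 1 f x) ^ 2 ≤ 2916 * (β - 1) ^ 2 * x ^ 4 := by
    have := pow_le_pow_left₀ (abs_nonneg _) (abs_v_sub_v_one_le (hf.mono_set hsub)
      (fun s hs => hf2 s ⟨hs.1, hs.2.trans hx.2⟩) hβ hx) 2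
    rw [sq_abs] at this
    linarith [show (54 * |β - 1| * x ^ 2) ^ 2 = 2916 * (β - 1) ^ 2 * x ^ 4 by
      rw [mul_pow, mul_pow, sq_abs]; ring]
  have hexp : Γ (fun s => f s - f₀ s) x ^ 2 ≤ (exp x * Γ (fun s => f s - f₀ s) x) ^ 2 := by
    rw [mul_pow]
    exact le_mul_of_one_le_left (sq_nonneg _) (one_le_pow₀ (one_le_exp hx.1))
  rw [hsplit] at hexp
  nlinarith [sq_nonneg (v β f x - v 1 f₀ x + (v β f x - v 1 f x))]

theorem sq_mul_pow_four_le_sq_v_sub_add_integral (hf : IntervalIntegrable f volume 0 1)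
    (hf₀ : IntervalIntegrable f₀ volume 0 1) (hf1 : ∀ s ∈ Icc (0:ℝ) 1, 1 ≤ f s)
    (hβ : 0 ≤ β) (hx : x ∈ Icc (0:ℝ) 1) :
    (β - 1) ^ 2 * x ^ 4 / 4 ≤ 4 * ((v β f x - v 1 f₀ x) ^ 2 + (v (2 * β) f x - v 2 f₀ x) ^ 2)
      + 162 * x * ∫ t in (0:ℝ)..x, Γ (fun s => f s - f₀ s) t ^ 2 := by
  have hsub : uIcc 0 x ⊆ uIcc 0 1 := uIcc_subset_uIcc_left (Icc_subset_uIcc hx)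
  have hsplit : (v (2 * β) f x - v 2 f₀ x) - (v β f x - v 1 f₀ x)
      = (v (2 * β) f x - v 2 f x - (v β f x - v 1 f x))
        + (v 2 (fun s => f s - f₀ s) x - v 1 (fun s => f s - f₀ s) x) := by
    rw [← v_sub 2 (hf.mono_set hsub) (hf₀.mono_set hsub),
      ← v_sub 1 (hf.mono_set hsub) (hf₀.mono_set hsub)]
    ring
  have hW := sq_mul_pow_four_le_sq_second_difference (hf.mono_set hsub)
    (fun s hs => hf1 s ⟨hs.1, hs.2.trans hx.2⟩) hβ hx.1
  have hρ := sq_v_two_sub_v_one_le (hf.sub hf₀) hx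
  set W := v (2 * β) f x - v 2 f x - (v β f x - v 1 f x)
  set ρ := v 2 (fun s => f s - f₀ s) x - v 1 (fun s => f s - f₀ s) x
  have hsq := congrArg (· ^ 2) hsplit
  nlinarith [sq_nonneg (v (2 * β) f x - v 2 f₀ x + (v β f x - v 1 f₀ x)), sq_nonneg (W + 2 * ρ)]

end Model

/-- Stability condition (8) of Assumption 3(b) with r' = 1 for the SemiPDE model of
Example 3, with true parameter θ₀ = (1, 2) and true nonparametric component f₀. -/
theorem stability_condition (f₀ : ℝ → ℝ) (hf₀m : Measurable f₀)
    (hf₀r : ∀ s ∈ Set.Icc (0:ℝ) 1, f₀ s ∈ Set.Icc (1:ℝ) 2) :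
    ∃ c : ℝ, 0 < c ∧
      ∀ β ∈ Set.Icc (0:ℝ) 2,
        ∀ f : ℝ → ℝ, Measurable f →
          (∀ s ∈ Set.Icc (0:ℝ) 1, f s ∈ Set.Icc (1:ℝ) 2) →
          (L2v (fun x => u β f x - u 1 f₀ x)) ^ 2 ≥
            c * (|β - 1| ^ 2 + (L2 (Γ (fun x => f x - f₀ x))) ^ 2) := by
  refine ⟨1 / 10 ^ 22, by norm_num, fun β hβ f hfm hfr => ?_⟩
  have hf := hfm.intervalIntegrable_of_mem_Icc zero_le_one hfr
  have hf₀ := hf₀m.intervalIntegrable_of_mem_Icc zero_le_one hf₀r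
  have hf2 : ∀ s ∈ Icc (0:ℝ) 1, |f s| ≤ 2 := fun s hs =>
    abs_le.2 ⟨by linarith [(hfr s hs).1], (hfr s hs).2⟩
  have key := sq_add_integral_sq_le_mul_integral (b := β - 1)
    (d := fun x => (v β f x - v 1 f₀ x) ^ 2 + (v (2 * β) f x - v 2 f₀ x) ^ 2)
    ((((continuousOn_v β hf).sub (continuousOn_v 1 hf₀)).pow 2).add
      (((continuousOn_v (2 * β) hf).sub (continuousOn_v 2 hf₀)).pow 2))
    (continuousOn_Γ (hf.sub hf₀)) (fun x _ => by positivity)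
    (fun x hx => (sq_Γ_sub_le hf hf₀ hf2 hβ hx).trans <| by
      linarith [sq_nonneg (v (2 * β) f x - v 2 f₀ x)])
    (fun x hx => sq_mul_pow_four_le_sq_v_sub_add_integral hf hf₀ (fun s hs => (hfr s hs).1) hβ.1 hx)
  have hL2v : L2v (fun x => u β f x - u 1 f₀ x) ^ 2
      = ∫ x in (0:ℝ)..1, ((v β f x - v 1 f₀ x) ^ 2 + (v (2 * β) f x - v 2 f₀ x) ^ 2) := by
    rw [L2v, sq_sqrt (intervalIntegral.integral_nonneg zero_le_one fun x _ => by positivity)]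
    simp [u]
  rw [ge_iff_le, hL2v, L2, sq_sqrt (intervalIntegral.integral_nonneg zero_le_one
    fun x _ => sq_nonneg _), sq_abs]
  linarith
end

section
/- For every β ∈ [0,2], every measurable f : [0,1] → [1,2], and every x ∈ [0,1], one has g(x; β, f) ≥ x²/2, where g(x; b, f) = ∫_0^x (x−s) e^{b(x−s)} e^s f(s) ds is the partial derivative of v(x; ·, f) at b. Consequently ‖∂_β u(·; β, f)‖_{L²} ≥ ‖g(·; β, f)‖_{L²} ≥ 1/(2√5) > 0, where ∂_β u(x; β, f) = (g(x; β, f), 2 g(x; 2β, f)); hence the sensitivity condition of Assumption 3(c) holds for the SemiPDE model of Example 3 with C_θ = 1/(2√5). -/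
open MeasureTheory Set

/-- `g(x; b, f) = ∫_0^x (x−s) e^{b(x−s)} e^s f(s) ds`, the partial derivative of
`v(x; ·, f)` at `b`. -/
noncomputable def gDeriv (b : ℝ) (f : ℝ → ℝ) (x : ℝ) : ℝ :=
  ∫ s in (0:ℝ)..x, (x - s) * Real.exp (b * (x - s)) * Real.exp s * f s

/-!
On `[0, x]` each of the factors `e^{b(x−s)}`, `e^s` and `f s` of the integrand of `g` is at
least `1`, so `g(x) ≥ ∫_0^x (x − s) ds = x²/2`, and squaring and integrating gives
`‖g‖² ≥ ∫_0^1 x⁴/4 = 1/20`. Comparing the interval integrals behind the `L²` norms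
needs the squares to be integrable (a non-integrable integrand integrates to `0`); this follows from
continuity of `g`, which is seen by splitting `e^{b(x−s)} e^s = e^{bx} e^{(1−b)s}`, so that
`g(x) = e^{bx} (x P(x) − Q(x))` for primitives `P`, `Q` of integrable functions.
-/

theorem gDeriv_eq {b x : ℝ} {f : ℝ → ℝ} (hf : IntervalIntegrable f volume 0 x) :
    gDeriv b f x = Real.exp (b * x) * (x * ∫ s in (0:ℝ)..x, Real.exp ((1 - b) * s) * f s)
      - Real.exp (b * x) * ∫ s in (0:ℝ)..x, s * Real.exp ((1 - b) * s) * f s := by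
  have hsplit : ∀ s, Real.exp (b * (x - s)) * Real.exp s
      = Real.exp (b * x) * Real.exp ((1 - b) * s) := by
    intro s
    rw [← Real.exp_add, ← Real.exp_add]; ring_nf
  have h₁ : IntervalIntegrable (fun s => Real.exp ((1 - b) * s) * f s) volume 0 x :=
    hf.continuousOn_mul (by fun_prop)
  have h₂ : IntervalIntegrable (fun s => s * Real.exp ((1 - b) * s) * f s) volume 0 x :=
    hf.continuousOn_mul (by fun_prop)
  rw [← intervalIntegral.integral_const_mul, ← intervalIntegral.integral_const_mul,
    ← intervalIntegral.integral_const_mul, ← intervalIntegral.integral_sub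
      ((h₁.const_mul x).const_mul _) (h₂.const_mul _), gDeriv]
  refine intervalIntegral.integral_congr fun s _ => ?_
  rw [mul_assoc (x - s), hsplit]
  ring

theorem continuousOn_gDeriv (b : ℝ) {T : ℝ} {f : ℝ → ℝ}
    (hf : IntervalIntegrable f volume 0 T) : ContinuousOn (gDeriv b f) (uIcc 0 T) := by
  have hP : ContinuousOn (fun x => ∫ s in (0:ℝ)..x, Real.exp ((1 - b) * s) * f s) (uIcc 0 T) :=
    intervalIntegral.continuousOn_primitive_interval' (hf.continuousOn_mul (by fun_prop))
      left_mem_uIcc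
  have hQ : ContinuousOn (fun x => ∫ s in (0:ℝ)..x, s * Real.exp ((1 - b) * s) * f s)
      (uIcc 0 T) :=
    intervalIntegral.continuousOn_primitive_interval' (hf.continuousOn_mul (by fun_prop))
      left_mem_uIcc
  refine ContinuousOn.congr (by fun_prop) fun x hx => gDeriv_eq (hf.mono_set ?_)
  exact uIcc_subset_uIcc left_mem_uIcc hx

theorem sq_div_two_le_gDeriv {b x : ℝ} {f : ℝ → ℝ} (hb : 0 ≤ b) (hx : 0 ≤ x)
    (hf : IntervalIntegrable f volume 0 x) (hf₁ : ∀ s ∈ Icc 0 x, 1 ≤ f s) :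
    x ^ 2 / 2 ≤ gDeriv b f x := by
  have hkernel : ∫ s in (0:ℝ)..x, (x - s) = x ^ 2 / 2 := by
    simp only [intervalIntegral.integral_sub intervalIntegrable_const
      intervalIntegral.intervalIntegrable_id,
      intervalIntegral.integral_const, integral_id, smul_eq_mul]
    ring
  rw [← hkernel, gDeriv]
  refine intervalIntegral.integral_mono_on hx
    ((continuous_const.sub continuous_id).intervalIntegrable _ _)
    (hf.continuousOn_mul (by fun_prop)) fun s hs => ?_
  have hxs : 0 ≤ x - s := sub_nonneg.mpr hs.2
  calc x - s = (x - s) * 1 * 1 * 1 := by ring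
    _ ≤ (x - s) * Real.exp (b * (x - s)) * Real.exp s * f s := by
      gcongr
      · exact Real.one_le_exp (mul_nonneg hb hxs)
      · exact Real.one_le_exp hs.1
      · exact hf₁ s hs

theorem L2_mono {φ w : ℝ → ℝ} (hφ : IntervalIntegrable (fun x => φ x ^ 2) volume 0 1)
    (hw : IntervalIntegrable (fun x => w x ^ 2) volume 0 1)
    (hφ₀ : ∀ x ∈ Icc (0:ℝ) 1, 0 ≤ φ x) (hφw : ∀ x ∈ Icc (0:ℝ) 1, φ x ≤ w x) :
    L2 φ ≤ L2 w :=
  Real.sqrt_le_sqrt <| intervalIntegral.integral_mono_on zero_le_one hφ hw fun x hx =>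
    pow_le_pow_left₀ (hφ₀ x hx) (hφw x hx) 2

theorem L2_le_L2v {w h : ℝ → ℝ} (hw : IntervalIntegrable (fun x => w x ^ 2) volume 0 1)
    (hh : IntervalIntegrable (fun x => h x ^ 2) volume 0 1) :
    L2 w ≤ L2v fun x => (w x, h x) :=
  Real.sqrt_le_sqrt <| intervalIntegral.integral_mono_on zero_le_one hw (hw.add hh) fun x _ =>
    le_add_of_nonneg_right (sq_nonneg (h x))

theorem L2_sq_div_two : L2 (fun x => x ^ 2 / 2) = 1 / (2 * Real.sqrt 5) := by
  have h : ∫ x in (0:ℝ)..1, (x ^ 2 / 2) ^ 2 = (1 / (2 * Real.sqrt 5)) ^ 2 := by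
    simp only [div_pow, ← pow_mul, intervalIntegral.integral_div, integral_pow, mul_pow,
      Real.sq_sqrt (show (0:ℝ) ≤ 5 by norm_num)]
    norm_num
  rw [L2, h, Real.sqrt_sq (by positivity)]

/-- Sensitivity condition of Assumption 3(c) for the SemiPDE model of Example 3 with
`C_θ = 1/(2√5)`: `g(x; β, f) ≥ x²/2`, hence
`‖∂_β u(·; β, f)‖_{L²} ≥ ‖g(·; β, f)‖_{L²} ≥ 1/(2√5) > 0`, where
`∂_β u(x; β, f) = (g(x; β, f), 2 g(x; 2β, f))`. -/
theorem sensitivity_condition (β : ℝ) (hβ : β ∈ Set.Icc (0:ℝ) 2)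
    (f : ℝ → ℝ) (hfm : Measurable f)
    (hfr : ∀ s ∈ Set.Icc (0:ℝ) 1, f s ∈ Set.Icc (1:ℝ) 2) :
    (∀ x ∈ Set.Icc (0:ℝ) 1, gDeriv β f x ≥ x ^ 2 / 2) ∧
    L2v (fun x => (gDeriv β f x, 2 * gDeriv (2 * β) f x)) ≥ L2 (gDeriv β f) ∧
    L2 (gDeriv β f) ≥ 1 / (2 * Real.sqrt 5) ∧
    (0 : ℝ) < 1 / (2 * Real.sqrt 5) := by
  have hf : IntervalIntegrable f volume 0 1 := by
    refine (intervalIntegrable_iff_integrableOn_Icc_of_le zero_le_one).mpr <|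
      Measure.integrableOn_of_bounded (M := 2) measure_Icc_lt_top.ne
        hfm.aestronglyMeasurable <| ae_restrict_of_forall_mem measurableSet_Icc fun s hs => ?_
    obtain ⟨h₁, h₂⟩ := hfr s hs
    rw [Real.norm_eq_abs, abs_of_nonneg (by linarith)]
    exact h₂
  have hlow : ∀ x ∈ Icc (0:ℝ) 1, x ^ 2 / 2 ≤ gDeriv β f x := fun x hx =>
    have hsub : uIcc 0 x ⊆ uIcc 0 1 :=
      uIcc_subset_uIcc left_mem_uIcc (by rwa [uIcc_of_le zero_le_one])
    sq_div_two_le_gDeriv hβ.1 hx.1 (hf.mono_set hsub) fun s hs =>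
      (hfr s ⟨hs.1, hs.2.trans hx.2⟩).1
  have hsq : ∀ {w : ℝ → ℝ}, ContinuousOn w (uIcc 0 1) →
      IntervalIntegrable (fun x => w x ^ 2) volume 0 1 := fun hw => (hw.pow 2).intervalIntegrable
  have hg : ∀ b, IntervalIntegrable (fun x => gDeriv b f x ^ 2) volume 0 1 := fun b =>
    hsq (continuousOn_gDeriv b hf)
  refine ⟨hlow, L2_le_L2v (hg β) (hsq (continuousOn_const.mul (continuousOn_gDeriv _ hf))),
    ?_, by positivity⟩
  rw [ge_iff_le, ← L2_sq_div_two]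
  exact L2_mono (hsq (by fun_prop)) (hg β) (fun x _ => by positivity) hlow
end
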